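/- arXiv:0709.1316 — 2 statements merged into one kernel-verified Lean document; each statement's English description precedes it below -/
import Mathlib

section
/- Let G be a locally compact Hausdorff topological group with right Haar measure μ, and let (Λ_λ) be a Følner net in G, i.e. a net of Borel subsets of G with 0 < μ(Λ_λ) < ∞ for every λ and lim_λ μ(Λ_λ Δ (Λ_λ g))/μ(Λ_λ) = 0 for every g ∈ G. Let H be a complex Hilbert space and let U : G → B(H) satisfy ‖U_g‖ ≤ 1 and U_g U_h = U_{gh} for all g, h ∈ G, and assume that for each x ∈ H the map g ↦ U_g x is strongly (Bochner) measurable. Let V = {x ∈ H : U_g x = x for all g ∈ G} and let P be the orthogonal projection of H onto V. Then for every x ∈ H, the Bochner integral averages (1/μ(Λ_λ)) ∫_{Λ_λ} U_g x dμ(g) converge in the norm of H to Px. -/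
open Filter MeasureTheory
open scoped InnerProductSpace Topology ENNReal

/-!
Write `x = P x + (x - P x)`. The averages fix `P x`. A vector orthogonal to every coboundary
`U h y - y` satisfies `⟪U h w, w⟫ = ‖w‖²`, hence is fixed by the contraction `U h`; so `x - P x`,
being orthogonal to the fixed vectors, lies in the closed span of the coboundaries. On a coboundary
the average is the difference of the integrals of `g ↦ U g y` over `Λ h` and `Λ` (right invariance
of `μ`), of norm at most `‖y‖ μ(Λ ∆ Λ h) / μ(Λ) → 0` by the Følner property. The averages are
contractions, so this convergence passes to the closed span.
-/

section Hilbert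

variable {𝕜 E : Type*} [RCLike 𝕜] [NormedAddCommGroup E] [InnerProductSpace 𝕜 E]

theorem ContinuousLinearMap.apply_eq_self_of_forall_inner_apply_sub_eq_zero (T : E →L[𝕜] E)
    (hT : ‖T‖ ≤ 1) {w : E} (hw : ∀ y, ⟪T y - y, w⟫_𝕜 = 0) : T w = w := by
  refine eq_of_norm_le_re_inner_eq_norm_sq (𝕜 := 𝕜) ?_ ?_
  · simpa using T.le_of_opNorm_le hT w
  · have hTw := hw w
    rw [inner_sub_left, sub_eq_zero] at hTw
    rw [hTw, inner_self_eq_norm_sq]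

theorem mem_closure_span_sub_of_forall_inner_fixed_eq_zero [CompleteSpace E] {α : Type*}
    (U : α → E →L[𝕜] E) (hU : ∀ a, ‖U a‖ ≤ 1) {z : E}
    (hz : ∀ v, (∀ a, U a v = v) → ⟪z, v⟫_𝕜 = 0) :
    z ∈ closure (Submodule.span 𝕜 (⋃ a, Set.range ⇑(U a - 1)) : Set E) := by
  rw [← Submodule.topologicalClosure_coe, SetLike.mem_coe,
    ← Submodule.orthogonal_orthogonal_eq_closure]
  refine (Submodule.mem_orthogonal' _ _).2 fun w hw => ?_
  refine hz w fun a => (U a).apply_eq_self_of_forall_inner_apply_sub_eq_zero (hU a) fun y => ?_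
  exact (Submodule.mem_orthogonal _ w).1 hw _
    (Submodule.subset_span (Set.mem_iUnion.2 ⟨a, y, rfl⟩))

end Hilbert

theorem ContinuousLinearMap.tendsto_zero_of_mem_closure_span {𝕜 E F ι : Type*}
    [NontriviallyNormedField 𝕜] [NormedAddCommGroup E] [NormedSpace 𝕜 E]
    [NormedAddCommGroup F] [NormedSpace 𝕜 F] {l : Filter ι} (A : ι → E →L[𝕜] F) {C : ℝ}
    (hA : ∀ i, ‖A i‖ ≤ C) {S : Set E} (hS : ∀ y ∈ S, Tendsto (fun i => A i y) l (𝓝 0))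
    {x : E} (hx : x ∈ closure (Submodule.span 𝕜 S : Set E)) :
    Tendsto (fun i => A i x) l (𝓝 0) := by
  let M : Submodule 𝕜 E :=
    { carrier := {y | Tendsto (fun i => A i y) l (𝓝 0)}
      zero_mem' := by simpa using tendsto_const_nhds
      add_mem' := fun hy hz => by simpa using hy.add hz
      smul_mem' := fun c y hy => by simpa using hy.const_smul c }
  have hequi : Equicontinuous ((↑) ∘ A) :=
    ((NormedSpace.equicontinuous_TFAE A).out 5 1).1 (⟨C, hA⟩ : ∃ C, ∀ i, ‖A i‖ ≤ C)
  have hM : IsClosed (M : Set E) := hequi.isClosed_setOfPred_tendsto continuous_const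
  exact closure_minimal ((Submodule.span_le (p := M)).2 hS) hM hx

theorem norm_setIntegral_sub_setIntegral_le {X E : Type*} [MeasurableSpace X]
    [NormedAddCommGroup E] [NormedSpace ℝ E] {μ : Measure X} {f : X → E} {s t : Set X} {C : ℝ}
    (hs : MeasurableSet s) (ht : MeasurableSet t) (hsμ : μ s ≠ ∞) (htμ : μ t ≠ ∞)
    (hf : AEStronglyMeasurable f μ) (hC : ∀ x, ‖f x‖ ≤ C) :
    ‖∫ x in s, f x ∂μ - ∫ x in t, f x ∂μ‖ ≤ C * μ.real (symmDiff s t) := by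
  have hfs := Measure.integrableOn_of_bounded hsμ hf (ae_of_all _ hC)
  have hft := Measure.integrableOn_of_bounded htμ hf (ae_of_all _ hC)
  rw [← integral_inter_add_sdiff ht hfs, ← integral_inter_add_sdiff hs hft, Set.inter_comm t s,
    add_sub_add_left_eq_sub, measureReal_symmDiff_eq hs ht hsμ htμ, mul_add]
  calc ‖∫ x in s \ t, f x ∂μ - ∫ x in t \ s, f x ∂μ‖
      ≤ ‖∫ x in s \ t, f x ∂μ‖ + ‖∫ x in t \ s, f x ∂μ‖ := norm_sub_le _ _
    _ ≤ C * μ.real (s \ t) + C * μ.real (t \ s) := by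
      gcongr
      · exact norm_setIntegral_le_of_norm_le_const
          ((measure_mono Set.sdiff_subset).trans_lt hsμ.lt_top) fun x _ => hC x
      · exact norm_setIntegral_le_of_norm_le_const
          ((measure_mono Set.sdiff_subset).trans_lt htμ.lt_top) fun x _ => hC x

theorem norm_setAverage_le_of_norm_le {X E : Type*} [MeasurableSpace X]
    [NormedAddCommGroup E] [NormedSpace ℝ E] {μ : Measure X} {s : Set X} {f : X → E} {C : ℝ}
    (hC₀ : 0 ≤ C) (hC : ∀ x, ‖f x‖ ≤ C) :
    ‖⨍ x in s, f x ∂μ‖ ≤ C := by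
  rw [setAverage_eq, norm_smul, norm_inv, Real.norm_of_nonneg measureReal_nonneg]
  rcases (measureReal_nonneg (μ := μ) (s := s)).eq_or_lt with hs₀ | hs₀
  · simpa [← hs₀] using hC₀
  · rw [inv_mul_le_iff₀ hs₀, mul_comm]
    exact norm_setIntegral_le_of_norm_le_const (ENNReal.toReal_pos_iff.1 hs₀).2 fun x _ => hC x

theorem integrableOn_apply_of_norm_le {G 𝕜 E : Type*} [MeasurableSpace G]
    [NontriviallyNormedField 𝕜] [NormedAddCommGroup E] [NormedSpace 𝕜 E] {μ : Measure G}
    {s : Set G} {U : G → E →L[𝕜] E} {C : ℝ} (hs : μ s ≠ ∞) (hU : ∀ g, ‖U g‖ ≤ C)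
    (hUmeas : ∀ x, StronglyMeasurable fun g => U g x) (x : E) :
    IntegrableOn (fun g => U g x) s μ :=
  Measure.integrableOn_of_bounded hs (hUmeas x).aestronglyMeasurable
    (ae_of_all _ fun g => (U g).le_of_opNorm_le (hU g) x)

section SetAverage

variable {G 𝕜 E : Type*} [MeasurableSpace G] [NontriviallyNormedField 𝕜] [NormedAddCommGroup E]
  [NormedSpace ℝ E] [NormedSpace 𝕜 E] [SMulCommClass ℝ 𝕜 E] {μ : Measure G} {s : Set G}
  {U : G → E →L[𝕜] E}

variable (μ s) in
noncomputable def setAverageCLM (hs : μ s ≠ ∞) (hU : ∀ g, ‖U g‖ ≤ 1)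
    (hUmeas : ∀ x, StronglyMeasurable fun g => U g x) : E →L[𝕜] E :=
  LinearMap.mkContinuous
    { toFun := fun x => ⨍ g in s, U g x ∂μ
      map_add' := fun x y => by
        simp only [map_add, setAverage_eq, ← smul_add]
        rw [integral_add (integrableOn_apply_of_norm_le hs hU hUmeas x)
          (integrableOn_apply_of_norm_le hs hU hUmeas y)]
      map_smul' := fun c x => by
        simp only [map_smul, setAverage_eq, integral_smul, RingHom.id_apply]
        exact smul_comm _ _ _ }
    1 fun x => norm_setAverage_le_of_norm_le (by positivity) fun g =>
      (U g).le_of_opNorm_le (hU g) x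

theorem setAverageCLM_apply (hs : μ s ≠ ∞) (hU : ∀ g, ‖U g‖ ≤ 1)
    (hUmeas : ∀ x, StronglyMeasurable fun g => U g x) (x : E) :
    setAverageCLM μ s hs hU hUmeas x = ⨍ g in s, U g x ∂μ :=
  rfl

theorem norm_setAverageCLM_le (hs : μ s ≠ ∞) (hU : ∀ g, ‖U g‖ ≤ 1)
    (hUmeas : ∀ x, StronglyMeasurable fun g => U g x) :
    ‖setAverageCLM μ s hs hU hUmeas‖ ≤ 1 :=
  LinearMap.mkContinuous_norm_le _ zero_le_one _

end SetAverage

section RightTranslation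

variable {G 𝕜 E : Type*} [Group G] [MeasurableSpace G] [MeasurableMul G] {μ : Measure G}
  [μ.IsMulRightInvariant] [NontriviallyNormedField 𝕜] [NormedAddCommGroup E] [NormedSpace ℝ E]
  [NormedSpace 𝕜 E] {U : G → E →L[𝕜] E} {C : ℝ}

theorem setIntegral_comp_mul_right (f : G → E) (s : Set G) (h : G) :
    ∫ g in s, f (g * h) ∂μ = ∫ g in (· * h) '' s, f g ∂μ :=
  ((measurePreserving_mul_right μ h).setIntegral_image_emb
    (MeasurableEquiv.mulRight h).measurableEmbedding f s).symm

theorem norm_setAverage_apply_sub_le (hU : ∀ g, ‖U g‖ ≤ C)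
    (hUmul : ∀ g h, U g ∘L U h = U (g * h)) (hUmeas : ∀ x, StronglyMeasurable fun g => U g x)
    {s : Set G} (hs : MeasurableSet s) (hsμ : μ s ≠ ∞) (h : G) (y : E) :
    ‖⨍ g in s, U g (U h y - y) ∂μ‖ ≤ C * ‖y‖ * (μ (symmDiff s ((· * h) '' s)) / μ s).toReal := by
  set t := (· * h) '' s with ht_def
  have ht : MeasurableSet t := by
    rw [ht_def, Set.image_mul_right]; exact measurable_mul_const h⁻¹ hs
  have htμ : μ t = μ s := by
    rw [ht_def, Set.image_mul_right]
    exact (measurePreserving_mul_right μ h⁻¹).measure_preimage hs.nullMeasurableSet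
  have hUh_int : IntegrableOn (fun g => U (g * h) y) s μ :=
    integrableOn_apply_of_norm_le hsμ (fun g => hU (g * h))
      (fun x => (hUmeas x).comp_measurable (measurable_mul_const h)) y
  have havg : ⨍ g in s, U g (U h y - y) ∂μ
      = (μ.real s)⁻¹ • ((∫ g in t, U g y ∂μ) - ∫ g in s, U g y ∂μ) := by
    rw [setAverage_eq, ← setIntegral_comp_mul_right,
      ← integral_sub hUh_int (integrableOn_apply_of_norm_le hsμ hU hUmeas y)]
    simp only [map_sub, ← ContinuousLinearMap.comp_apply, hUmul]
  have hdiff := norm_setIntegral_sub_setIntegral_le ht hs (htμ ▸ hsμ) hsμ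
    (hUmeas y).aestronglyMeasurable fun g => (U g).le_of_opNorm_le (hU g) y
  rw [symmDiff_comm] at hdiff
  rw [havg, norm_smul, norm_inv, Real.norm_of_nonneg measureReal_nonneg]
  calc (μ.real s)⁻¹ * ‖(∫ g in t, U g y ∂μ) - ∫ g in s, U g y ∂μ‖
      ≤ (μ.real s)⁻¹ * (C * ‖y‖ * μ.real (symmDiff s t)) := by gcongr
    _ = C * ‖y‖ * (μ (symmDiff s t) / μ s).toReal := by
      rw [ENNReal.toReal_div, measureReal_def, measureReal_def]; ring

theorem tendsto_setAverage_apply_sub_of_tendsto_measure_symmDiff (hU : ∀ g, ‖U g‖ ≤ C)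
    (hUmul : ∀ g h, U g ∘L U h = U (g * h)) (hUmeas : ∀ x, StronglyMeasurable fun g => U g x)
    {ι : Type*} {l : Filter ι} {Λ : ι → Set G} (hΛmeas : ∀ i, MeasurableSet (Λ i))
    (hΛfin : ∀ i, μ (Λ i) < ∞) {h : G}
    (hFolner : Tendsto (fun i => μ (symmDiff (Λ i) ((· * h) '' Λ i)) / μ (Λ i)) l (𝓝 0))
    (y : E) :
    Tendsto (fun i => ⨍ g in Λ i, U g (U h y - y) ∂μ) l (𝓝 0) := by
  refine squeeze_zero_norm
    (fun i => norm_setAverage_apply_sub_le hU hUmul hUmeas (hΛmeas i) (hΛfin i).ne h y) ?_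
  simpa using ((ENNReal.tendsto_toReal ENNReal.zero_ne_top).comp hFolner).const_mul (C * ‖y‖)

end RightTranslation

theorem mean_ergodic_theorem_folner_net_general
    {G : Type*} [Group G] [TopologicalSpace G] [IsTopologicalGroup G]
    [MeasurableSpace G] [BorelSpace G]
    (μ : Measure G) [μ.IsMulRightInvariant]
    {ι : Type*} [Preorder ι]
    (Λ : ι → Set G) (hΛmeas : ∀ i, MeasurableSet (Λ i))
    (hΛpos : ∀ i, 0 < μ (Λ i)) (hΛfin : ∀ i, μ (Λ i) < ∞)
    (hFolner : ∀ g : G,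
      Tendsto (fun i => μ (symmDiff (Λ i) ((· * g) '' Λ i)) / μ (Λ i))
        atTop (𝓝 0))
    {H : Type*} [NormedAddCommGroup H] [InnerProductSpace ℂ H] [CompleteSpace H]
    (U : G → H →L[ℂ] H)
    (hUcontr : ∀ g, ‖U g‖ ≤ 1)
    (hUmul : ∀ g h : G, U g ∘L U h = U (g * h))
    (hUmeas : ∀ x : H, StronglyMeasurable fun g => U g x)
    (P : H →L[ℂ] H)
    (hPmem : ∀ x : H, ∀ g : G, U g (P x) = P x)
    (hPorth : ∀ x v : H, (∀ g : G, U g v = v) → ⟪x - P x, v⟫_ℂ = 0) :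
    ∀ x : H,
      Tendsto (fun i => (μ (Λ i)).toReal⁻¹ • ∫ g in Λ i, U g x ∂μ)
        atTop (𝓝 (P x)) := by
  intro x
  let A i := setAverageCLM μ (Λ i) (hΛfin i).ne hUcontr hUmeas
  have hfixed : ∀ i, A i (P x) = P x := fun i => by
    simp only [A, setAverageCLM_apply, hPmem]
    exact setAverage_const (hΛpos i).ne' (hΛfin i).ne _
  have hcoboundary : ∀ y ∈ ⋃ g, Set.range ⇑(U g - 1), Tendsto (fun i => A i y) atTop (𝓝 0) := by
    simp only [Set.mem_iUnion, Set.mem_range]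
    rintro _ ⟨h, y, rfl⟩
    exact tendsto_setAverage_apply_sub_of_tendsto_measure_symmDiff hUcontr hUmul hUmeas hΛmeas
      hΛfin (hFolner h) y
  have hrest : Tendsto (fun i => A i (x - P x)) atTop (𝓝 0) :=
    ContinuousLinearMap.tendsto_zero_of_mem_closure_span A
      (fun i => norm_setAverageCLM_le (hΛfin i).ne hUcontr hUmeas) hcoboundary
      (mem_closure_span_sub_of_forall_inner_fixed_eq_zero U hUcontr (hPorth x))
  have hlim := (tendsto_const_nhds (x := P x)).add hrest
  simp only [map_sub, hfixed, add_sub_cancel, add_zero] at hlim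
  simpa only [A, setAverageCLM_apply, setAverage_eq, measureReal_def] using hlim

/-- Mean ergodic theorem (1.1): for a right-Haar measure `μ` on a locally compact
Hausdorff group `G`, a Følner net `(Λ_λ)`, and a strongly measurable contraction
representation `U` of `G` on a complex Hilbert space `H`, the Bochner integral
averages `(1/μ(Λ_λ)) ∫_{Λ_λ} U_g x dμ(g)` converge in norm to `P x`, where `P` is
the orthogonal projection onto the fixed subspace `V = {x : U_g x = x ∀ g}`. -/
theorem mean_ergodic_theorem_folner_net
    {G : Type*} [Group G] [TopologicalSpace G] [IsTopologicalGroup G]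
    [LocallyCompactSpace G] [T2Space G] [MeasurableSpace G] [BorelSpace G]
    (μ : Measure G) [μ.Regular] [μ.IsMulRightInvariant] (hμ : μ ≠ 0)
    {ι : Type*} [Preorder ι] [IsDirected ι (· ≤ ·)] [Nonempty ι]
    (Λ : ι → Set G) (hΛmeas : ∀ i, MeasurableSet (Λ i))
    (hΛpos : ∀ i, 0 < μ (Λ i)) (hΛfin : ∀ i, μ (Λ i) < ∞)
    (hFolner : ∀ g : G,
      Tendsto (fun i => μ (symmDiff (Λ i) ((· * g) '' Λ i)) / μ (Λ i))
        atTop (𝓝 0))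
    {H : Type*} [NormedAddCommGroup H] [InnerProductSpace ℂ H] [CompleteSpace H]
    (U : G → H →L[ℂ] H)
    (hUcontr : ∀ g, ‖U g‖ ≤ 1)
    (hUmul : ∀ g h : G, U g ∘L U h = U (g * h))
    (hUmeas : ∀ x : H, StronglyMeasurable fun g => U g x)
    (P : H →L[ℂ] H)
    (hPmem : ∀ x : H, ∀ g : G, U g (P x) = P x)
    (hPorth : ∀ x v : H, (∀ g : G, U g v = v) → ⟪x - P x, v⟫_ℂ = 0) :
    ∀ x : H,
      Tendsto (fun i => (μ (Λ i)).toReal⁻¹ • ∫ g in Λ i, U g x ∂μ)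
        atTop (𝓝 (P x)) :=
  mean_ergodic_theorem_folner_net_general μ Λ hΛmeas hΛpos hΛfin hFolner U hUcontr hUmul hUmeas P
    hPmem hPorth
end

section
/- Let G be a locally compact Hausdorff topological group with right Haar measure μ. Let H be a complex Hilbert space and let U : G → B(H) satisfy ‖U_g‖ ≤ 1 and U_g U_h = U_{gh} for all g, h ∈ G, with g ↦ U_g x strongly (Bochner) measurable for each x ∈ H. Then for every x ∈ H, every h ∈ G and every Borel set Λ ⊆ G with μ(Λ) < ∞, one has ‖∫_Λ U_g (x − U_h x) dμ(g)‖ ≤ ‖x‖ · μ(Λ Δ (Λh)). In particular, if (Λ_λ) is a Følner net for G (a net of Borel sets with 0 < μ(Λ_λ) < ∞ and lim_λ μ(Λ_λ Δ (Λ_λ g))/μ(Λ_λ) = 0 for all g ∈ G), then the averages (1/μ(Λ_λ)) ∫_{Λ_λ} U_g (x − U_h x) dμ(g) converge to 0 in norm. -/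
/-!
Writing `f g = U g x`, multiplicativity gives `U g (x - U h x) = f g - f (g h)`, and right
invariance of `μ` turns `∫_Λ f (g h) dμ(g)` into `∫_{Λh} f dμ`. The integrals of `f` over `Λ` and
over `Λh` agree on `Λ ∩ Λh`, so their difference only sees `Λ Δ Λh`, where `‖f‖ ≤ ‖x‖`. Dividing by
`μ(Λ)` gives the Følner statement.
-/

open Filter MeasureTheory Set
open scoped Topology ENNReal symmDiff

section SymmDiff

variable {X E : Type*} [MeasurableSpace X] [NormedAddCommGroup E] [NormedSpace ℝ E]
  {μ : Measure X} {f : X → E} {s t : Set X} {C : ℝ}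

theorem setIntegral_sub_setIntegral_eq_sdiff (hs : MeasurableSet s) (ht : MeasurableSet t)
    (hfs : IntegrableOn f s μ) (hft : IntegrableOn f t μ) :
    ∫ x in s, f x ∂μ - ∫ x in t, f x ∂μ = ∫ x in s \ t, f x ∂μ - ∫ x in t \ s, f x ∂μ := by
  rw [← integral_inter_add_sdiff ht hfs, ← integral_inter_add_sdiff hs hft, inter_comm t s]
  abel

theorem norm_setIntegral_sub_setIntegral_le_s2 (hs : MeasurableSet s) (ht : MeasurableSet t)
    (hfs : IntegrableOn f s μ) (hft : IntegrableOn f t μ) (hst : μ (s ∆ t) ≠ ∞)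
    (hC : ∀ x ∈ s ∆ t, ‖f x‖ ≤ C) :
    ‖∫ x in s, f x ∂μ - ∫ x in t, f x ∂μ‖ ≤ C * μ.real (s ∆ t) := by
  have hst' : μ (s \ t) < ∞ := (measure_mono (by simp [symmDiff_def])).trans_lt hst.lt_top
  have hts' : μ (t \ s) < ∞ := (measure_mono (by simp [symmDiff_def])).trans_lt hst.lt_top
  have hmeas : μ.real (s ∆ t) = μ.real (s \ t) + μ.real (t \ s) := by
    simp only [Measure.real]
    rw [measure_symmDiff_eq hs.nullMeasurableSet ht.nullMeasurableSet,
      ENNReal.toReal_add hst'.ne hts'.ne]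
  rw [setIntegral_sub_setIntegral_eq_sdiff hs ht hfs hft, hmeas, mul_add]
  refine (norm_sub_le _ _).trans (add_le_add ?_ ?_)
  · exact norm_setIntegral_le_of_norm_le_const hst' fun x hx => hC x (Or.inl hx)
  · exact norm_setIntegral_le_of_norm_le_const hts' fun x hx => hC x (Or.inr hx)

end SymmDiff

theorem norm_setIntegral_sub_mul_right_le {G E : Type*} [Group G] [MeasurableSpace G]
    [MeasurableMul G] [NormedAddCommGroup E] [NormedSpace ℝ E] {μ : Measure G}
    [μ.IsMulRightInvariant] {f : G → E} {C : ℝ} (hf : AEStronglyMeasurable f μ)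
    (hC : ∀ g, ‖f g‖ ≤ C) (h : G) {Λ : Set G} (hΛ : MeasurableSet Λ) (hfin : μ Λ ≠ ∞) :
    ‖∫ g in Λ, (f g - f (g * h)) ∂μ‖ ≤ C * μ.real (Λ ∆ ((· * h) '' Λ)) := by
  have hpres := measurePreserving_mul_right μ h
  have hemb := measurableEmbedding_mulRight h
  have hfin' : μ ((· * h) '' Λ) ≠ ∞ := by
    rwa [image_mul_right, measure_preimage_mul_right]
  have hint : ∀ s, μ s ≠ ∞ → IntegrableOn f s μ := fun s hs =>
    Measure.integrableOn_of_bounded hs hf (ae_of_all _ hC)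
  have hint_mul : IntegrableOn (fun g => f (g * h)) Λ μ :=
    Measure.integrableOn_of_bounded hfin (hf.comp_measurePreserving hpres)
      (ae_of_all _ fun g => hC (g * h))
  rw [integral_sub (hint Λ hfin) hint_mul, ← hpres.setIntegral_image_emb hemb]
  exact norm_setIntegral_sub_setIntegral_le_s2 hΛ (hemb.measurableSet_image.2 hΛ) (hint Λ hfin)
    (hint _ hfin') (measure_symmDiff_ne_top hfin hfin') fun g _ => hC g

theorem tendsto_toReal_inv_smul_of_norm_le {ι E : Type*} [NormedAddCommGroup E] [NormedSpace ℝ E]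
    {l : Filter ι} {v : ι → E} {a b : ι → ℝ≥0∞} {C : ℝ} (hv : ∀ i, ‖v i‖ ≤ C * (a i).toReal)
    (hab : Tendsto (fun i => a i / b i) l (𝓝 0)) :
    Tendsto (fun i => (b i).toReal⁻¹ • v i) l (𝓝 0) := by
  have hbound : ∀ i, ‖(b i).toReal⁻¹ • v i‖ ≤ C * (a i / b i).toReal := fun i => by
    rw [norm_smul, norm_inv, Real.norm_of_nonneg ENNReal.toReal_nonneg, ENNReal.toReal_div,
      mul_div_assoc', div_eq_inv_mul]
    exact mul_le_mul_of_nonneg_left (hv i) (inv_nonneg.2 ENNReal.toReal_nonneg)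
  refine squeeze_zero_norm hbound ?_
  simpa using ((ENNReal.tendsto_toReal ENNReal.zero_ne_top).comp hab).const_mul C

theorem norm_setIntegral_sub_le_and_folner_average_tendsto_zero_general
    {G : Type*} [Group G] [TopologicalSpace G] [IsTopologicalGroup G]
    [MeasurableSpace G] [BorelSpace G]
    (μ : Measure G) [μ.IsMulRightInvariant]
    {H : Type*} [NormedAddCommGroup H] [InnerProductSpace ℂ H]
    (U : G → H →L[ℂ] H)
    (hUcontr : ∀ g, ‖U g‖ ≤ 1)
    (hUmul : ∀ g h : G, U g ∘L U h = U (g * h))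
    (hUmeas : ∀ x : H, StronglyMeasurable fun g => U g x) :
    (∀ (x : H) (h : G) (Λ : Set G), MeasurableSet Λ → μ Λ < ∞ →
      ‖∫ g in Λ, U g (x - U h x) ∂μ‖ ≤
        ‖x‖ * (μ (symmDiff Λ ((· * h) '' Λ))).toReal) ∧
    (∀ (ι : Type) [Preorder ι] [IsDirected ι (· ≤ ·)] [Nonempty ι]
        (Λ : ι → Set G), (∀ i, MeasurableSet (Λ i)) →
      (∀ i, 0 < μ (Λ i)) → (∀ i, μ (Λ i) < ∞) →
      (∀ g : G, Tendsto (fun i => μ (symmDiff (Λ i) ((· * g) '' Λ i)) / μ (Λ i))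
          atTop (𝓝 0)) →
      ∀ (x : H) (h : G),
        Tendsto (fun i => (μ (Λ i)).toReal⁻¹ • ∫ g in Λ i, U g (x - U h x) ∂μ)
          atTop (𝓝 (0 : H))) := by
  have hbound : ∀ (x : H) (h : G) (Λ : Set G), MeasurableSet Λ → μ Λ < ∞ →
      ‖∫ g in Λ, U g (x - U h x) ∂μ‖ ≤ ‖x‖ * μ.real (Λ ∆ ((· * h) '' Λ)) := by
    intro x h Λ hΛ hfin
    have hsplit : ∀ g, U g (x - U h x) = U g x - U (g * h) x := fun g => by
      rw [map_sub, ← hUmul]; rfl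
    simp_rw [hsplit]
    exact norm_setIntegral_sub_mul_right_le (hUmeas x).aestronglyMeasurable
      (fun g => ((U g).le_of_opNorm_le (hUcontr g) x).trans_eq (one_mul _)) h hΛ hfin.ne
  exact ⟨hbound, fun ι _ _ _ Λ hΛ _ hfin hFolner x h =>
    tendsto_toReal_inv_smul_of_norm_le (fun i => hbound x h (Λ i) (hΛ i) (hfin i)) (hFolner h)⟩

/-- For a right-Haar measure `μ` on a locally compact Hausdorff group `G` and a
strongly measurable contraction representation `U` on a complex Hilbert space `H`:
(i) `‖∫_Λ U_g (x - U_h x) dμ(g)‖ ≤ ‖x‖ · μ(Λ Δ Λh)` for every `x`, `h` and Borel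
set `Λ` of finite measure; (ii) consequently, along any Følner net `(Λ_λ)` the
averages `(1/μ(Λ_λ)) ∫_{Λ_λ} U_g (x - U_h x) dμ(g)` converge to `0` in norm. -/
theorem norm_setIntegral_sub_le_and_folner_average_tendsto_zero
    {G : Type*} [Group G] [TopologicalSpace G] [IsTopologicalGroup G]
    [LocallyCompactSpace G] [T2Space G] [MeasurableSpace G] [BorelSpace G]
    (μ : Measure G) [μ.Regular] [μ.IsMulRightInvariant] (hμ : μ ≠ 0)
    {H : Type*} [NormedAddCommGroup H] [InnerProductSpace ℂ H] [CompleteSpace H]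
    (U : G → H →L[ℂ] H)
    (hUcontr : ∀ g, ‖U g‖ ≤ 1)
    (hUmul : ∀ g h : G, U g ∘L U h = U (g * h))
    (hUmeas : ∀ x : H, StronglyMeasurable fun g => U g x) :
    (∀ (x : H) (h : G) (Λ : Set G), MeasurableSet Λ → μ Λ < ∞ →
      ‖∫ g in Λ, U g (x - U h x) ∂μ‖ ≤
        ‖x‖ * (μ (symmDiff Λ ((· * h) '' Λ))).toReal) ∧
    (∀ (ι : Type) [Preorder ι] [IsDirected ι (· ≤ ·)] [Nonempty ι]
        (Λ : ι → Set G), (∀ i, MeasurableSet (Λ i)) →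
      (∀ i, 0 < μ (Λ i)) → (∀ i, μ (Λ i) < ∞) →
      (∀ g : G, Tendsto (fun i => μ (symmDiff (Λ i) ((· * g) '' Λ i)) / μ (Λ i))
          atTop (𝓝 0)) →
      ∀ (x : H) (h : G),
        Tendsto (fun i => (μ (Λ i)).toReal⁻¹ • ∫ g in Λ i, U g (x - U h x) ∂μ)
          atTop (𝓝 (0 : H))) :=
  norm_setIntegral_sub_le_and_folner_average_tendsto_zero_general μ U hUcontr hUmul hUmeas
end
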